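/- arXiv:quant-ph/0410165 — 6 statements merged into one kernel-verified Lean document; each statement's English description precedes it below -/
import Mathlib

section
/- For every Q ∈ C^l_n and every v ∈ F_2^{2n}, the support of Qv equals the support of v: supp(Qv) = supp(v). -/
/-- The field `F₂ = GF(2)`. -/
abbrev F2 : Type := ZMod 2

/-- `F₂^{2n}`: coordinate `i` of a vector corresponds to `Sum.inl i`
and coordinate `n + i` corresponds to `Sum.inr i`, for `i ∈ {1,…,n}`. -/
abbrev V (n : ℕ) : Type := (Fin n ⊕ Fin n) → F2

/-- The support of `v ∈ F₂^{2n}`: the set of `i ∈ {1,…,n}`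
with `(v_i, v_{n+i}) ≠ (0,0)`. -/
def supp {n : ℕ} (v : V n) : Finset (Fin n) :=
  Finset.univ.filter fun i => (v (Sum.inl i), v (Sum.inr i)) ≠ ((0 : F2), (0 : F2))

/-- Membership in the binary local Clifford group `C^l_n`: an invertible `2n × 2n`
matrix over `F₂` of block form `[[A,B],[C,D]]` with `A, B, C, D` diagonal. -/
def IsLocalClifford {n : ℕ} (Q : Matrix (Fin n ⊕ Fin n) (Fin n ⊕ Fin n) F2) : Prop :=
  IsUnit Q ∧ ∃ A B C D : Fin n → F2,
    Q = Matrix.fromBlocks (Matrix.diagonal A) (Matrix.diagonal B)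
      (Matrix.diagonal C) (Matrix.diagonal D)

/-- The symplectic inner product `⟨v,w⟩ = Σᵢ (vᵢ w_{n+i} + v_{n+i} wᵢ)` on `F₂^{2n}`. -/
def symp {n : ℕ} (v w : V n) : F2 :=
  ∑ i : Fin n, (v (Sum.inl i) * w (Sum.inr i) + v (Sum.inr i) * w (Sum.inl i))

/-- A stabilizer subspace: an `n`-dimensional subspace of `F₂^{2n}` which equals its
orthogonal complement with respect to the symplectic inner product. -/
def IsStabilizer {n : ℕ} (S : Submodule F2 (V n)) : Prop :=
  Module.finrank F2 S = n ∧ ∀ w : V n, w ∈ S ↔ ∀ v ∈ S, symp v w = 0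

/-- Local Clifford (LC) equivalence: `Q S = S'` for some `Q ∈ C^l_n`. -/
def LCequiv {n : ℕ} (S S' : Submodule F2 (V n)) : Prop :=
  ∃ Q : Matrix (Fin n ⊕ Fin n) (Fin n ⊕ Fin n) F2,
    IsLocalClifford Q ∧ S.map Q.mulVecLin = S'

/-- `T^Ω(S)`: the set of `r`-tuples `(v^1, …, v^r) ∈ S × ⋯ × S` with
`supp(v^k) = ω^k` and `supp(v^k + v^l) = ω^{kl}` for `k < l`. -/
def Tset {n : ℕ} (r : ℕ) (S : Submodule F2 (V n))
    (ω : Fin r → Finset (Fin n)) (ωp : Fin r → Fin r → Finset (Fin n)) :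
    Set (Fin r → V n) :=
  {v | (∀ k, v k ∈ S) ∧ (∀ k, supp (v k) = ω k) ∧
    ∀ k l, k < l → supp (v k + v l) = ωp k l}

/-- `V^Ω(S)`: the set of `r`-tuples `(v^1, …, v^r) ∈ S × ⋯ × S` with
`supp(v^k) ⊆ ω^k` and `supp(v^k + v^l) ⊆ ω^{kl}` for `k < l`. -/
def Vset {n : ℕ} (r : ℕ) (S : Submodule F2 (V n))
    (ω : Fin r → Finset (Fin n)) (ωp : Fin r → Fin r → Finset (Fin n)) :
    Set (Fin r → V n) :=
  {v | (∀ k, v k ∈ S) ∧ (∀ k, supp (v k) ⊆ ω k) ∧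
    ∀ k l, k < l → supp (v k + v l) ⊆ ωp k l}

/-- For every `Q ∈ C^l_n` and every `v ∈ F₂^{2n}`, `supp(Qv) = supp(v)`. -/
theorem supp_mulVec_of_localClifford (n : ℕ) (hn : 1 ≤ n)
    (Q : Matrix (Fin n ⊕ Fin n) (Fin n ⊕ Fin n) F2) (hQ : IsLocalClifford Q)
    (v : V n) :
    supp (Q.mulVec v) = supp v := by
  obtain ⟨hU, A, B, C, D, rfl⟩ := hQ
  set Q := Matrix.fromBlocks (Matrix.diagonal A) (Matrix.diagonal B)
      (Matrix.diagonal C) (Matrix.diagonal D) with hQdef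
  have hl : ∀ (x : V n) (i : Fin n),
      Q.mulVec x (Sum.inl i) = A i * x (Sum.inl i) + B i * x (Sum.inr i) := by
    intro x i
    simp [hQdef, Matrix.fromBlocks_mulVec, Matrix.mulVec_diagonal]
  have hr : ∀ (x : V n) (i : Fin n),
      Q.mulVec x (Sum.inr i) = C i * x (Sum.inl i) + D i * x (Sum.inr i) := by
    intro x i
    simp [hQdef, Matrix.fromBlocks_mulVec, Matrix.mulVec_diagonal]
  have hinj : Function.Injective Q.mulVec := Matrix.mulVec_injective_iff_isUnit.2 hU
  ext i
  simp only [supp, Finset.mem_filter, Finset.mem_univ, true_and]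
  rw [not_iff_not.symm, not_not, not_not, Prod.mk.injEq, Prod.mk.injEq]
  constructor
  · rintro ⟨h1, h2⟩
    -- build the vector equal to v at coordinate i, zero elsewhere
    set u : V n := fun j => if j = Sum.inl i ∨ j = Sum.inr i then v j else 0 with hu
    have hmu : Q.mulVec u = 0 := by
      funext j
      rcases j with j | j
      · rw [hl u j]
        by_cases hji : j = i
        · subst hji
          simp only [hu, if_pos (Or.inl rfl), if_pos (Or.inr rfl)]
          rw [← hl v j, h1]; rfl
        · have : ¬((Sum.inl j : Fin n ⊕ Fin n) = Sum.inl i ∨ (Sum.inl j : Fin n ⊕ Fin n) = Sum.inr i) := by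
            simp [hji]
          have h2' : ¬((Sum.inr j : Fin n ⊕ Fin n) = Sum.inl i ∨ (Sum.inr j : Fin n ⊕ Fin n) = Sum.inr i) := by
            simp [hji]
          simp only [hu, if_neg this, if_neg h2']
          simp
      · rw [hr u j]
        by_cases hji : j = i
        · subst hji
          simp only [hu, if_pos (Or.inl rfl), if_pos (Or.inr rfl)]
          rw [← hr v j, h2]; rfl
        · have : ¬((Sum.inl j : Fin n ⊕ Fin n) = Sum.inl i ∨ (Sum.inl j : Fin n ⊕ Fin n) = Sum.inr i) := by
            simp [hji]
          have h2' : ¬((Sum.inr j : Fin n ⊕ Fin n) = Sum.inl i ∨ (Sum.inr j : Fin n ⊕ Fin n) = Sum.inr i) := by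
            simp [hji]
          simp only [hu, if_neg this, if_neg h2']
          simp
    have hu0 : u = 0 := by
      apply hinj
      rw [hmu, Matrix.mulVec_zero]
    constructor
    · have := congrFun hu0 (Sum.inl i); simpa [hu] using this
    · have := congrFun hu0 (Sum.inr i); simpa [hu] using this
  · rintro ⟨hv1, hv2⟩
    constructor
    · rw [hl v i, hv1, hv2]; ring
    · rw [hr v i, hv1, hv2]; ring
end

section
/- (Theorem 1, part (i)) Let S and S' be stabilizer subspaces of F_2^{2n} that are LC equivalent, i.e. Q S = S' for some Q ∈ C^l_n. Then for every r ≥ 1 and every family Ω of subsets ω^k, ω^{kl} ⊆ {1,…,n} (1 ≤ k < l ≤ r), the sets T^Ω(S) and T^Ω(S') have the same (finite) cardinality. -/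
lemma mv_inl {n : ℕ} (A B C D : Fin n → F2) (v : V n) (i : Fin n) :
    (Matrix.fromBlocks (Matrix.diagonal A) (Matrix.diagonal B)
      (Matrix.diagonal C) (Matrix.diagonal D)).mulVec v (Sum.inl i)
      = A i * v (Sum.inl i) + B i * v (Sum.inr i) := by
  simp [Matrix.mulVec, dotProduct, Fintype.sum_sum_type, Matrix.diagonal_apply,
    ite_mul, Finset.sum_ite_eq]

lemma mv_inr {n : ℕ} (A B C D : Fin n → F2) (v : V n) (i : Fin n) :
    (Matrix.fromBlocks (Matrix.diagonal A) (Matrix.diagonal B)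
      (Matrix.diagonal C) (Matrix.diagonal D)).mulVec v (Sum.inr i)
      = C i * v (Sum.inl i) + D i * v (Sum.inr i) := by
  simp [Matrix.mulVec, dotProduct, Fintype.sum_sum_type, Matrix.diagonal_apply,
    ite_mul, Finset.sum_ite_eq]

lemma supp_mulVec {n : ℕ} {Q : Matrix (Fin n ⊕ Fin n) (Fin n ⊕ Fin n) F2}
    (hQ : IsLocalClifford Q) (v : V n) : supp (Q.mulVec v) = supp v := by
  obtain ⟨hu, A, B, C, D, rfl⟩ := hQ
  have hinj : Function.Injective
      (Matrix.fromBlocks (Matrix.diagonal A) (Matrix.diagonal B)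
        (Matrix.diagonal C) (Matrix.diagonal D)).mulVec :=
    Matrix.mulVec_injective_iff_isUnit.2 hu
  ext i
  simp only [supp, Finset.mem_filter, Finset.mem_univ, true_and, not_iff_not, Prod.mk.injEq]
  constructor
  · rintro ⟨h1, h2⟩
    rw [mv_inl] at h1
    rw [mv_inr] at h2
    by_contra hne
    push_neg at hne
    set e : V n := fun j => if j = Sum.inl i then v (Sum.inl i)
      else if j = Sum.inr i then v (Sum.inr i) else 0 with he
    have hQe : (Matrix.fromBlocks (Matrix.diagonal A) (Matrix.diagonal B)
        (Matrix.diagonal C) (Matrix.diagonal D)).mulVec e = 0 := by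
      funext j
      rcases j with j | j
      · rw [mv_inl]
        by_cases hj : j = i
        · subst hj; simpa [he] using h1
        · simp [he, Sum.inl.injEq, hj]
      · rw [mv_inr]
        by_cases hj : j = i
        · subst hj; simpa [he] using h2
        · simp [he, Sum.inr.injEq, hj]
    have he0 : e = 0 := by
      apply hinj
      rw [hQe, Matrix.mulVec_zero]
    have h1' : v (Sum.inl i) = 0 := by
      have := congrFun he0 (Sum.inl i); simpa [he] using this
    have h2' : v (Sum.inr i) = 0 := by
      have := congrFun he0 (Sum.inr i); simpa [he] using this
    exact hne h1' h2'
  · rintro ⟨h1, h2⟩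
    rw [mv_inl, mv_inr, h1, h2]
    constructor <;> ring

/-- Theorem 1, part (i): if the stabilizer subspaces `S, S'` are LC equivalent then for every
`r ≥ 1` and every family `Ω` of subsets of `{1,…,n}`, `|T^Ω(S)| = |T^Ω(S')|`. -/
theorem card_Tset_eq_of_LCequiv (n : ℕ) (hn : 1 ≤ n)
    (S S' : Submodule F2 (V n)) (hS : IsStabilizer S) (hS' : IsStabilizer S')
    (hLC : LCequiv S S')
    (r : ℕ) (hr : 1 ≤ r)
    (ω : Fin r → Finset (Fin n)) (ωp : Fin r → Fin r → Finset (Fin n)) :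
    Nat.card (Tset r S ω ωp) = Nat.card (Tset r S' ω ωp) := by
  obtain ⟨Q, hQ, hmap⟩ := hLC
  have hinj : Function.Injective Q.mulVec := Matrix.mulVec_injective_iff_isUnit.2 hQ.1
  have hF : Function.Injective (fun v : Fin r → V n => fun k => Q.mulVec (v k)) := by
    intro u w h
    funext k
    exact hinj (congrFun h k)
  have himg : Tset r S' ω ωp
      = (fun v : Fin r → V n => fun k => Q.mulVec (v k)) '' Tset r S ω ωp := by
    ext w
    constructor
    · rintro ⟨hmem, hs, hsp⟩
      have hch : ∀ k, ∃ u, u ∈ S ∧ Q.mulVec u = w k := by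
        intro k
        have : w k ∈ S.map Q.mulVecLin := hmap ▸ hmem k
        obtain ⟨u, hu, hu'⟩ := this
        exact ⟨u, hu, by simpa [Matrix.mulVecLin_apply] using hu'⟩
      choose u hu hQu using hch
      refine ⟨u, ⟨hu, ?_, ?_⟩, funext hQu⟩
      · intro k
        rw [← hs k, ← hQu k, supp_mulVec hQ]
      · intro k l hkl
        rw [← hsp k l hkl, ← hQu k, ← hQu l, ← Matrix.mulVec_add, supp_mulVec hQ]
    · rintro ⟨u, ⟨hu, hs, hsp⟩, rfl⟩
      refine ⟨fun k => ?_, fun k => ?_, fun k l hkl => ?_⟩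
      · rw [← hmap]
        exact ⟨u k, hu k, by simp [Matrix.mulVecLin_apply]⟩
      · rw [supp_mulVec hQ, hs k]
      · rw [← Matrix.mulVec_add, supp_mulVec hQ, hsp k l hkl]
  rw [himg, Nat.card_image_of_injective hF]
end

section
/- (Theorem 1, part (ii)) Let S and S' be stabilizer subspaces of F_2^{2n}. Suppose that for every family Ω of subsets ω^k, ω^{kl} ⊆ {1,…,n} (1 ≤ k < l ≤ n, i.e. with r = n) the sets T^Ω(S) and T^Ω(S') have the same cardinality. Then S and S' are LC equivalent: there exists Q ∈ C^l_n with Q S = S'. -/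
/-! ### Auxiliary lemmas -/

/-- The three nonzero points of `F₂ × F₂`. -/
def Epts : Fin 3 → F2 × F2 := ![(1,0),(0,1),(1,1)]

lemma Epts_surj : ∀ x : F2 × F2, x ≠ 0 → ∃ t, Epts t = x := by decide

lemma Epts_ne_zero : ∀ t, Epts t ≠ 0 := by decide

lemma ext_inj : ∀ g : Fin 3 → Option (Fin 3),
    (∀ i j a, g i = some a → g j = some a → i = j) →
    ∃ f : Fin 3 → Fin 3, Function.Injective f ∧ ∀ i a, g i = some a → f i = a := by decide

lemma inj_lin : ∀ f : Fin 3 → Fin 3, Function.Injective f →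
    ∃ a b c d a' b' c' d' : F2,
      (a*a'+b*c' = 1 ∧ a*b'+b*d' = 0 ∧ c*a'+d*c' = 0 ∧ c*b'+d*d' = 1 ∧
       a'*a+b'*c = 1 ∧ a'*b+b'*d = 0 ∧ c'*a+d'*c = 0 ∧ c'*b+d'*d = 1) ∧
      ∀ t, (a * (Epts t).1 + b * (Epts t).2, c * (Epts t).1 + d * (Epts t).2)
        = Epts (f t) := by decide

lemma F2_add_eq_zero : ∀ a b : F2, a + b = 0 ↔ a = b := by decide

lemma F2_add_self : ∀ a : F2, a + a = 0 := by decide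

/-- Any family of pairs in `F₂ × F₂` which matches another family in its pattern of
zeroes and coincidences can be mapped onto it by a single invertible `2 × 2` matrix. -/
lemma coord_lemma {m : ℕ} (p q : Fin m → F2 × F2)
    (h0 : ∀ k, p k = 0 ↔ q k = 0)
    (he : ∀ k l, p k = p l ↔ q k = q l) :
    ∃ a b c d a' b' c' d' : F2,
      (a*a'+b*c' = 1 ∧ a*b'+b*d' = 0 ∧ c*a'+d*c' = 0 ∧ c*b'+d*d' = 1 ∧
       a'*a+b'*c = 1 ∧ a'*b+b'*d = 0 ∧ c'*a+d'*c = 0 ∧ c'*b+d'*d = 1) ∧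
      ∀ k, (a * (p k).1 + b * (p k).2, c * (p k).1 + d * (p k).2) = q k := by
  classical
  let idx : F2 × F2 → Fin 3 := fun x => if h : ∃ t, Epts t = x then h.choose else 0
  have hidx : ∀ x : F2 × F2, x ≠ 0 → Epts (idx x) = x := by
    intro x hx
    have h : ∃ t, Epts t = x := Epts_surj x hx
    simp only [idx, dif_pos h]
    exact h.choose_spec
  have hqne : ∀ k, p k ≠ 0 → q k ≠ 0 := fun k hk hq => hk ((h0 k).mpr hq)
  let g : Fin 3 → Option (Fin 3) := fun t =>
    if h : ∃ k, p k = Epts t then some (idx (q h.choose)) else none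
  have hg : ∀ t a, g t = some a → ∃ k, p k = Epts t ∧ Epts a = q k := by
    intro t a ha
    simp only [g] at ha
    split_ifs at ha with h
    · refine ⟨h.choose, h.choose_spec, ?_⟩
      have hp0 : p h.choose ≠ 0 := by rw [h.choose_spec]; exact Epts_ne_zero t
      have : q h.choose ≠ 0 := hqne _ hp0
      rw [← Option.some_inj.mp ha]
      exact hidx _ this
  have hginj : ∀ i j a, g i = some a → g j = some a → i = j := by
    intro i j a hi hj
    obtain ⟨k, hk, hk'⟩ := hg i a hi
    obtain ⟨l, hl, hl'⟩ := hg j a hj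
    have : q k = q l := hk' ▸ hl'
    have : p k = p l := (he k l).mpr this
    have : Epts i = Epts j := hk ▸ hl ▸ this
    have h3 : Function.Injective Epts := by decide
    exact h3 this
  obtain ⟨f, hfinj, hf⟩ := ext_inj g hginj
  obtain ⟨a, b, c, d, a', b', c', d', hrel, hmap⟩ := inj_lin f hfinj
  refine ⟨a, b, c, d, a', b', c', d', hrel, fun k => ?_⟩
  by_cases hk : p k = 0
  · have hq : q k = 0 := (h0 k).mp hk
    rw [hk, hq]
    simp [Prod.ext_iff]
  · obtain ⟨t, ht⟩ := Epts_surj (p k) hk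
    have hex : ∃ k', p k' = Epts t := ⟨k, ht.symm⟩
    have hgt : g t = some (idx (q hex.choose)) := dif_pos hex
    obtain ⟨k', hk', hk''⟩ := hg t _ hgt
    have hft := hf t _ hgt
    have hpq : q k' = q k := (he k' k).mp (hk'.trans ht)
    calc (a * (p k).1 + b * (p k).2, c * (p k).1 + d * (p k).2)
        = (a * (Epts t).1 + b * (Epts t).2, c * (Epts t).1 + d * (Epts t).2) := by rw [ht]
      _ = Epts (f t) := hmap t
      _ = q k := by rw [hft, hk'', hpq]

lemma mem_supp_iff {n : ℕ} (v : V n) (i : Fin n) :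
    i ∈ supp v ↔ (v (Sum.inl i), v (Sum.inr i)) ≠ ((0 : F2), (0 : F2)) := by
  simp [supp]

lemma pair_eq_iff {n : ℕ} (x y : V n) (i : Fin n) :
    ((x (Sum.inl i), x (Sum.inr i)) = (y (Sum.inl i), y (Sum.inr i))) ↔
      i ∉ supp (x + y) := by
  rw [mem_supp_iff, not_not]
  simp only [Pi.add_apply, Prod.mk.injEq, F2_add_eq_zero]

/-- Theorem 1, part (ii): if the stabilizer subspaces `S, S'` satisfy
`|T^Ω(S)| = |T^Ω(S')|` for every family `Ω` with `r = n`, then `S` and `S'`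
are LC equivalent. -/
theorem LCequiv_of_card_Tset_eq (n : ℕ) (hn : 1 ≤ n)
    (S S' : Submodule F2 (V n)) (hS : IsStabilizer S) (hS' : IsStabilizer S')
    (h : ∀ (ω : Fin n → Finset (Fin n)) (ωp : Fin n → Fin n → Finset (Fin n)),
      Nat.card (Tset n S ω ωp) = Nat.card (Tset n S' ω ωp)) :
    LCequiv S S' := by
  classical
  -- a basis of S, viewed in V n
  let b : Module.Basis (Fin n) F2 ↥S := Module.finBasisOfFinrankEq F2 ↥S hS.1
  let v : Fin n → V n := fun k => (b k : V n)
  have hvmem : ∀ k, v k ∈ S := fun k => (b k).2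
  set ω : Fin n → Finset (Fin n) := fun k => supp (v k) with hω
  set ωp : Fin n → Fin n → Finset (Fin n) := fun k l => supp (v k + v l) with hωp
  have hvT : v ∈ Tset n S ω ωp := ⟨hvmem, fun k => rfl, fun k l _ => rfl⟩
  -- the corresponding T-set of S' is nonempty
  have hpos : 0 < Nat.card (Tset n S ω ωp) :=
    Nat.card_pos_iff.mpr ⟨⟨v, hvT⟩, Subtype.finite⟩
  rw [h ω ωp] at hpos
  obtain ⟨⟨w, hw1, hw2, hw3⟩⟩ := (Nat.card_pos_iff.mp hpos).1
  have hsupp : ∀ k, supp (v k) = supp (w k) := fun k => (hw2 k).symm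
  have hadd : ∀ k l, supp (v k + v l) = supp (w k + w l) := by
    intro k l
    rcases lt_trichotomy k l with hkl | rfl | hkl
    · exact (hw3 k l hkl).symm
    · have h1 : v k + v k = 0 := by funext j; exact F2_add_self _
      have h2 : w k + w k = 0 := by funext j; exact F2_add_self _
      rw [h1, h2]
    · rw [add_comm (v k) (v l), add_comm (w k) (w l)]
      exact (hw3 l k hkl).symm
  -- per-coordinate invertible linear maps
  have key : ∀ i : Fin n, ∃ a b c d a' b' c' d' : F2,
      (a*a'+b*c' = 1 ∧ a*b'+b*d' = 0 ∧ c*a'+d*c' = 0 ∧ c*b'+d*d' = 1 ∧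
       a'*a+b'*c = 1 ∧ a'*b+b'*d = 0 ∧ c'*a+d'*c = 0 ∧ c'*b+d'*d = 1) ∧
      ∀ k, (a * (v k (Sum.inl i)) + b * (v k (Sum.inr i)),
            c * (v k (Sum.inl i)) + d * (v k (Sum.inr i)))
          = (w k (Sum.inl i), w k (Sum.inr i)) := by
    intro i
    exact coord_lemma (fun k => (v k (Sum.inl i), v k (Sum.inr i)))
      (fun k => (w k (Sum.inl i), w k (Sum.inr i)))
      (by
        intro k
        have h3 : i ∈ supp (v k) ↔ i ∈ supp (w k) := by rw [hsupp k]
        rw [mem_supp_iff, mem_supp_iff] at h3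
        exact not_iff_not.mp h3)
      (by
        intro k l
        rw [pair_eq_iff (v k) (v l) i, pair_eq_iff (w k) (w l) i, hadd k l])
  choose A B C D A' B' C' D' hrel hmap using key
  set Q := Matrix.fromBlocks (Matrix.diagonal A) (Matrix.diagonal B)
      (Matrix.diagonal C) (Matrix.diagonal D) with hQdef
  set Q' := Matrix.fromBlocks (Matrix.diagonal A') (Matrix.diagonal B')
      (Matrix.diagonal C') (Matrix.diagonal D') with hQ'def
  have diag_combo : ∀ (f g f' g' : Fin n → F2) (e : Fin n → F2),
      (∀ i, f i * f' i + g i * g' i = e i) →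
      Matrix.diagonal f * Matrix.diagonal f' + Matrix.diagonal g * Matrix.diagonal g'
        = Matrix.diagonal e := by
    intro f g f' g' e he
    rw [Matrix.diagonal_mul_diagonal, Matrix.diagonal_mul_diagonal, Matrix.diagonal_add]
    exact congrArg Matrix.diagonal (funext he)
  have hQQ' : Q * Q' = 1 := by
    rw [hQdef, hQ'def, Matrix.fromBlocks_multiply,
      diag_combo A B A' C' 1 (fun i => (hrel i).1),
      diag_combo A B B' D' 0 (fun i => (hrel i).2.1),
      diag_combo C D A' C' 0 (fun i => (hrel i).2.2.1),
      diag_combo C D B' D' 1 (fun i => (hrel i).2.2.2.1)]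
    simp [Pi.one_def, Pi.zero_def, Matrix.fromBlocks_one]
  have hQ'Q : Q' * Q = 1 := by
    rw [hQdef, hQ'def, Matrix.fromBlocks_multiply,
      diag_combo A' B' A C 1 (fun i => (hrel i).2.2.2.2.1),
      diag_combo A' B' B D 0 (fun i => (hrel i).2.2.2.2.2.1),
      diag_combo C' D' A C 0 (fun i => (hrel i).2.2.2.2.2.2.1),
      diag_combo C' D' B D 1 (fun i => (hrel i).2.2.2.2.2.2.2)]
    simp [Pi.one_def, Pi.zero_def, Matrix.fromBlocks_one]
  -- the action of Q on vectors
  have hmulL : ∀ (x : V n) (i : Fin n),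
      Q.mulVec x (Sum.inl i) = A i * x (Sum.inl i) + B i * x (Sum.inr i) := by
    intro x i
    rw [hQdef]
    simp [Matrix.mulVec, dotProduct, Fintype.sum_sum_type,
      Matrix.fromBlocks_apply₁₁, Matrix.fromBlocks_apply₁₂, Matrix.fromBlocks_apply₂₁,
      Matrix.fromBlocks_apply₂₂, Matrix.diagonal_apply, ite_mul, zero_mul,
      Finset.sum_ite_eq, Finset.mem_univ]
  have hmulR : ∀ (x : V n) (i : Fin n),
      Q.mulVec x (Sum.inr i) = C i * x (Sum.inl i) + D i * x (Sum.inr i) := by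
    intro x i
    rw [hQdef]
    simp [Matrix.mulVec, dotProduct, Fintype.sum_sum_type,
      Matrix.fromBlocks_apply₁₁, Matrix.fromBlocks_apply₁₂, Matrix.fromBlocks_apply₂₁,
      Matrix.fromBlocks_apply₂₂, Matrix.diagonal_apply, ite_mul, zero_mul,
      Finset.sum_ite_eq, Finset.mem_univ]
  have hQv : ∀ k, Q.mulVec (v k) = w k := by
    intro k
    funext j
    cases j with
    | inl i =>
      rw [hmulL (v k) i]
      exact congrArg Prod.fst (hmap i k)
    | inr i =>
      rw [hmulR (v k) i]
      exact congrArg Prod.snd (hmap i k)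
  -- Q as a linear equivalence
  have h1 : Q.mulVecLin ∘ₗ Q'.mulVecLin = LinearMap.id := by
    rw [← Matrix.mulVecLin_mul, hQQ', Matrix.mulVecLin_one]
  have h2 : Q'.mulVecLin ∘ₗ Q.mulVecLin = LinearMap.id := by
    rw [← Matrix.mulVecLin_mul, hQ'Q, Matrix.mulVecLin_one]
  let e : V n ≃ₗ[F2] V n := LinearEquiv.ofLinear Q.mulVecLin Q'.mulVecLin h1 h2
  -- S is the span of the vᵏ
  have hSspan : S = Submodule.span F2 (Set.range v) := by
    have hb := b.span_eq
    have hm : Submodule.map S.subtype (Submodule.span F2 (Set.range ⇑b))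
        = Submodule.map S.subtype ⊤ := by rw [hb]
    rw [Submodule.map_span, Submodule.map_top, Submodule.range_subtype] at hm
    rw [← hm]
    congr 1
    rw [← Set.range_comp]
    rfl
  have hle : Submodule.map Q.mulVecLin S ≤ S' := by
    rw [hSspan, Submodule.map_span, Submodule.span_le]
    rintro x ⟨y, ⟨k, rfl⟩, rfl⟩
    show Q.mulVecLin (v k) ∈ S'
    rw [Matrix.mulVecLin_apply, hQv k]
    exact hw1 k
  have hfr : Module.finrank F2 (Submodule.map Q.mulVecLin S) = n := by
    have hfe := LinearEquiv.finrank_map_eq e S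
    rw [show (e : V n →ₗ[F2] V n) = Q.mulVecLin from rfl] at hfe
    rw [hfe, hS.1]
  have hmapeq : Submodule.map Q.mulVecLin S = S' :=
    Submodule.eq_of_le_of_finrank_le hle (by rw [hfr, hS'.1])
  exact ⟨Q, ⟨⟨⟨Q, Q', hQQ', hQ'Q⟩, rfl⟩, A, B, C, D, hQdef⟩, hmapeq⟩
end

section
/- Let r ≥ 1 and let x^1,…,x^r and y^1,…,y^r be vectors in F_2^2 such that for all k, l ∈ {1,…,r}: x^k = 0 if and only if y^k = 0, and x^k = x^l if and only if y^k = y^l. Then there exists an invertible 2×2 matrix Q over F_2 such that Q x^k = y^k for every k = 1,…,r. -/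
set_option synthInstance.maxSize 5000 in
set_option synthInstance.maxHeartbeats 2000000 in
set_option maxHeartbeats 100000000 in
set_option maxRecDepth 100000 in
private lemma key_GL2 : ∀ (S : Finset (Fin 2 → F2)) (g : (Fin 2 → F2) → (Fin 2 → F2)),
    (∀ v ∈ S, (v = 0 ↔ g v = 0)) →
    (∀ v ∈ S, ∀ w ∈ S, (v = w ↔ g v = g w)) →
    ∃ Q : Matrix (Fin 2) (Fin 2) F2, Q.det ≠ 0 ∧ ∀ v ∈ S, Q.mulVec v = g v := by
  decide

/-- Given vectors `x^1,…,x^r` and `y^1,…,y^r` in `F₂²` such that `x^k = 0 ↔ y^k = 0` and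
`x^k = x^l ↔ y^k = y^l` for all `k, l`, there is an invertible `2 × 2` matrix `Q` over `F₂`
with `Q x^k = y^k` for all `k`. -/
theorem exists_GL2_map (r : ℕ) (hr : 1 ≤ r) (x y : Fin r → Fin 2 → F2)
    (h0 : ∀ k, x k = 0 ↔ y k = 0)
    (heq : ∀ k l, x k = x l ↔ y k = y l) :
    ∃ Q : Matrix (Fin 2) (Fin 2) F2, IsUnit Q ∧ ∀ k, Q.mulVec (x k) = y k := by
  classical
  set S : Finset (Fin 2 → F2) := Finset.image x Finset.univ with hS
  set g : (Fin 2 → F2) → (Fin 2 → F2) := fun v =>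
    if h : ∃ k, x k = v then y (Classical.choose h) else 0 with hg
  have hmem : ∀ k, ∃ h : ∃ k', x k' = x k, g (x k) = y (Classical.choose h) := by
    intro k
    have h : ∃ k', x k' = x k := ⟨k, rfl⟩
    exact ⟨h, by simp [hg, dif_pos h]⟩
  have hgx : ∀ k, g (x k) = y k := by
    intro k
    obtain ⟨h, hgk⟩ := hmem k
    rw [hgk, ← heq]
    exact Classical.choose_spec h
  have h1 : ∀ v ∈ S, (v = 0 ↔ g v = 0) := by
    intro v hv
    obtain ⟨k, _, rfl⟩ := Finset.mem_image.mp hv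
    rw [hgx k]; exact h0 k
  have h2 : ∀ v ∈ S, ∀ w ∈ S, (v = w ↔ g v = g w) := by
    intro v hv w hw
    obtain ⟨k, _, rfl⟩ := Finset.mem_image.mp hv
    obtain ⟨l, _, rfl⟩ := Finset.mem_image.mp hw
    rw [hgx k, hgx l]; exact heq k l
  obtain ⟨Q, hQdet, hQ⟩ := key_GL2 S g h1 h2
  refine ⟨Q, ?_, fun k => ?_⟩
  · rw [Matrix.isUnit_iff_isUnit_det]
    exact isUnit_iff_ne_zero.mpr hQdet
  · rw [hQ (x k) (Finset.mem_image.mpr ⟨k, Finset.mem_univ k, rfl⟩), hgx k]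
end

section
/- Let r ≥ 1 and let v^1,…,v^r and w^1,…,w^r be vectors in F_2^{2n} such that for every i ∈ {1,…,n} and all k, l ∈ {1,…,r}: (v^k_i, v^k_{n+i}) = (0,0) if and only if (w^k_i, w^k_{n+i}) = (0,0), and (v^k_i, v^k_{n+i}) = (v^l_i, v^l_{n+i}) if and only if (w^k_i, w^k_{n+i}) = (w^l_i, w^l_{n+i}). Then there exists Q ∈ C^l_n such that Q v^k = w^k for every k = 1,…,r. -/
lemma L1' : ∀ a1 b1 a2 b2 : F2 × F2,
    (a1 ≠ 0 ∧ b1 ≠ 0 ∧ a2 ≠ 0 ∧ b2 ≠ 0 ∧ a1 ≠ a2 ∧ b1 ≠ b2) →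
    ∃ A B C D : F2, A*D + B*C = 1 ∧
      (A * a1.1 + B * a1.2, C * a1.1 + D * a1.2) = b1 ∧
      (A * a2.1 + B * a2.2, C * a2.1 + D * a2.2) = b2 := by decide

lemma L3' : ∀ p a1 a2 : F2 × F2, (a1 ≠ 0 ∧ a2 ≠ 0 ∧ a1 ≠ a2) →
    p = 0 ∨ p = a1 ∨ p = a2 ∨ p = a1 + a2 := by decide

lemma L4' : ∀ q b1 b2 : F2 × F2,
    (b1 ≠ 0 ∧ b2 ≠ 0 ∧ b1 ≠ b2 ∧ q ≠ 0 ∧ q ≠ b1 ∧ q ≠ b2) → q = b1 + b2 := by decide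

lemma Lne' : ∀ a1 a2 : F2 × F2, (a1 ≠ 0 ∧ a2 ≠ 0 ∧ a1 ≠ a2) →
    a1 + a2 ≠ 0 ∧ a1 + a2 ≠ a1 ∧ a1 + a2 ≠ a2 := by decide

lemma Lpick' : ∀ a1 b1 : F2 × F2, (a1 ≠ 0 ∧ b1 ≠ 0) →
    ∃ a2 b2 : F2 × F2, a2 ≠ 0 ∧ b2 ≠ 0 ∧ a1 ≠ a2 ∧ b1 ≠ b2 := by decide

lemma pair_lemma' {r : ℕ} (x y : Fin r → F2 × F2)
    (h0 : ∀ k, x k = 0 ↔ y k = 0)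
    (heq : ∀ k l, x k = x l ↔ y k = y l) :
    ∃ A B C D : F2, A*D + B*C = 1 ∧
      ∀ k, (A * (x k).1 + B * (x k).2, C * (x k).1 + D * (x k).2) = y k := by
  have key : ∀ (a1 b1 a2 b2 : F2 × F2), a1 ≠ 0 → b1 ≠ 0 → a2 ≠ 0 → b2 ≠ 0 → a1 ≠ a2 →
      b1 ≠ b2 → (∀ k, (x k = a1 ↔ y k = b1) ∧ (x k = a2 ↔ y k = b2)) →
      ∃ A B C D : F2, A*D + B*C = 1 ∧
        ∀ k, (A * (x k).1 + B * (x k).2, C * (x k).1 + D * (x k).2) = y k := by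
    intro a1 b1 a2 b2 ha1 hb1 ha2 hb2 ha12 hb12 hmap
    obtain ⟨A, B, C, D, hdet, h1, h2⟩ := L1' a1 b1 a2 b2 ⟨ha1, hb1, ha2, hb2, ha12, hb12⟩
    refine ⟨A, B, C, D, hdet, fun k => ?_⟩
    rcases L3' (x k) a1 a2 ⟨ha1, ha2, ha12⟩ with h | h | h | h
    · have hy : y k = 0 := (h0 k).mp h
      rw [h, hy]; simp [Prod.ext_iff]
    · rw [h, h1, ((hmap k).1.mp h)]
    · rw [h, h2, ((hmap k).2.mp h)]
    · obtain ⟨hne0, hne1, hne2⟩ := Lne' a1 a2 ⟨ha1, ha2, ha12⟩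
      have hy0 : y k ≠ 0 := fun hy => hne0 (h ▸ (h0 k).mpr hy)
      have hy1 : y k ≠ b1 := fun hy => hne1 (h ▸ (hmap k).1.mpr hy)
      have hy2 : y k ≠ b2 := fun hy => hne2 (h ▸ (hmap k).2.mpr hy)
      have hyk : y k = b1 + b2 := L4' (y k) b1 b2 ⟨hb1, hb2, hb12, hy0, hy1, hy2⟩
      rw [h, hyk]
      simp only [Prod.ext_iff, Prod.fst_add, Prod.snd_add] at h1 h2 ⊢
      constructor
      · linear_combination h1.1 + h2.1
      · linear_combination h1.2 + h2.2
  by_cases hz : ∀ k, x k = 0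
  · refine ⟨1, 0, 0, 1, by ring, fun k => ?_⟩
    have hy : y k = 0 := (h0 k).mp (hz k)
    rw [hz k, hy]; simp [Prod.ext_iff]
  · push_neg at hz
    obtain ⟨k0, hk0⟩ := hz
    have hb1 : y k0 ≠ 0 := fun hy => hk0 ((h0 k0).mpr hy)
    by_cases hsec : ∃ k1, x k1 ≠ 0 ∧ x k1 ≠ x k0
    · obtain ⟨k1, hk1, hk10⟩ := hsec
      have hb2 : y k1 ≠ 0 := fun hy => hk1 ((h0 k1).mpr hy)
      have hb12 : y k0 ≠ y k1 := fun hy => hk10 ((heq k1 k0).mpr hy.symm)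
      exact key (x k0) (y k0) (x k1) (y k1) hk0 hb1 hk1 hb2 (Ne.symm hk10) hb12
        (fun k => ⟨heq k k0, heq k k1⟩)
    · push_neg at hsec
      obtain ⟨a2, b2, ha2, hb2, ha12, hb12⟩ := Lpick' (x k0) (y k0) ⟨hk0, hb1⟩
      refine key (x k0) (y k0) a2 b2 hk0 hb1 ha2 hb2 ha12 hb12 (fun k => ⟨heq k k0, ?_, ?_⟩)
      · intro hx
        exfalso
        by_cases hxk : x k = 0
        · exact ha2 (hx.symm.trans hxk)
        · exact ha12 ((hsec k hxk).symm.trans hx)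
      · intro hy
        exfalso
        by_cases hxk : x k = 0
        · exact hb2 (hy.symm.trans ((h0 k).mp hxk))
        · exact hb12 (((heq k k0).mp (hsec k hxk)).symm.trans hy)

lemma fromBlocks_diag_mulVec {n : ℕ} (A B C D : Fin n → F2) (x : (Fin n ⊕ Fin n) → F2) :
    (Matrix.fromBlocks (Matrix.diagonal A) (Matrix.diagonal B)
      (Matrix.diagonal C) (Matrix.diagonal D)).mulVec x =
    Sum.elim (fun i => A i * x (Sum.inl i) + B i * x (Sum.inr i))
      (fun i => C i * x (Sum.inl i) + D i * x (Sum.inr i)) := by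
  have hx : x = Sum.elim (fun i => x (Sum.inl i)) (fun i => x (Sum.inr i)) := by
    funext j; cases j <;> rfl
  rw [hx, Matrix.fromBlocks_mulVec]
  funext j
  cases j <;> simp [Matrix.mulVec_diagonal]

/-- Given vectors `v^1,…,v^r` and `w^1,…,w^r` in `F₂^{2n}` such that, for every qubit `i`,
`(v^k_i, v^k_{n+i}) = (0,0) ↔ (w^k_i, w^k_{n+i}) = (0,0)` and
`(v^k_i, v^k_{n+i}) = (v^l_i, v^l_{n+i}) ↔ (w^k_i, w^k_{n+i}) = (w^l_i, w^l_{n+i})`,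
there exists `Q ∈ C^l_n` with `Q v^k = w^k` for all `k`. -/
theorem exists_localClifford_map (n : ℕ) (hn : 1 ≤ n) (r : ℕ) (hr : 1 ≤ r)
    (v w : Fin r → V n)
    (h0 : ∀ (i : Fin n) (k : Fin r),
      (v k (Sum.inl i), v k (Sum.inr i)) = ((0 : F2), (0 : F2)) ↔
      (w k (Sum.inl i), w k (Sum.inr i)) = ((0 : F2), (0 : F2)))
    (heq : ∀ (i : Fin n) (k l : Fin r),
      (v k (Sum.inl i), v k (Sum.inr i)) = (v l (Sum.inl i), v l (Sum.inr i)) ↔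
      (w k (Sum.inl i), w k (Sum.inr i)) = (w l (Sum.inl i), w l (Sum.inr i))) :
    ∃ Q : Matrix (Fin n ⊕ Fin n) (Fin n ⊕ Fin n) F2,
      IsLocalClifford Q ∧ ∀ k, Q.mulVec (v k) = w k := by
  have key : ∀ i : Fin n, ∃ A B C D : F2, A*D + B*C = 1 ∧ ∀ k,
      (A * v k (Sum.inl i) + B * v k (Sum.inr i),
        C * v k (Sum.inl i) + D * v k (Sum.inr i)) = (w k (Sum.inl i), w k (Sum.inr i)) := by
    intro i
    exact pair_lemma' (fun k => (v k (Sum.inl i), v k (Sum.inr i)))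
      (fun k => (w k (Sum.inl i), w k (Sum.inr i))) (fun k => h0 i k) (fun k l => heq i k l)
  choose A B C D hdet hmap using key
  set Q := Matrix.fromBlocks (Matrix.diagonal A) (Matrix.diagonal B)
    (Matrix.diagonal C) (Matrix.diagonal D) with hQ
  set Q' := Matrix.fromBlocks (Matrix.diagonal D) (Matrix.diagonal B)
    (Matrix.diagonal C) (Matrix.diagonal A) with hQ'
  have hmul : Q * Q' = 1 := by
    rw [hQ, hQ', Matrix.fromBlocks_multiply]
    have TL : Matrix.diagonal A * Matrix.diagonal D + Matrix.diagonal B * Matrix.diagonal C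
        = (1 : Matrix (Fin n) (Fin n) F2) := by
      rw [Matrix.diagonal_mul_diagonal, Matrix.diagonal_mul_diagonal, Matrix.diagonal_add]
      rw [show (fun i => A i * D i + B i * C i) = (fun _ => (1 : F2)) from funext fun i => hdet i,
        Matrix.diagonal_one]
    have TR : Matrix.diagonal A * Matrix.diagonal B + Matrix.diagonal B * Matrix.diagonal A
        = (0 : Matrix (Fin n) (Fin n) F2) := by
      rw [Matrix.diagonal_mul_diagonal, Matrix.diagonal_mul_diagonal, Matrix.diagonal_add]
      rw [show (fun i => A i * B i + B i * A i) = (fun _ => (0 : F2)) from funext fun i => by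
        rw [mul_comm (B i) (A i)]; exact CharTwo.add_self_eq_zero _, Matrix.diagonal_zero]
    have BL : Matrix.diagonal C * Matrix.diagonal D + Matrix.diagonal D * Matrix.diagonal C
        = (0 : Matrix (Fin n) (Fin n) F2) := by
      rw [Matrix.diagonal_mul_diagonal, Matrix.diagonal_mul_diagonal, Matrix.diagonal_add]
      rw [show (fun i => C i * D i + D i * C i) = (fun _ => (0 : F2)) from funext fun i => by
        rw [mul_comm (D i) (C i)]; exact CharTwo.add_self_eq_zero _, Matrix.diagonal_zero]
    have BR : Matrix.diagonal C * Matrix.diagonal B + Matrix.diagonal D * Matrix.diagonal A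
        = (1 : Matrix (Fin n) (Fin n) F2) := by
      rw [Matrix.diagonal_mul_diagonal, Matrix.diagonal_mul_diagonal, Matrix.diagonal_add]
      rw [show (fun i => C i * B i + D i * A i) = (fun _ => (1 : F2)) from funext fun i => by
        linear_combination hdet i, Matrix.diagonal_one]
    rw [TL, TR, BL, BR, Matrix.fromBlocks_one]
  have hunit : IsUnit Q := by
    rw [Matrix.isUnit_iff_isUnit_det]
    exact IsUnit.of_mul_eq_one Q'.det (by rw [← Matrix.det_mul, hmul, Matrix.det_one])
  refine ⟨Q, ⟨hunit, A, B, C, D, hQ⟩, fun k => ?_⟩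
  rw [hQ, fromBlocks_diag_mulVec]
  funext j
  cases j with
  | inl i =>
    have := hmap i k
    rw [Prod.mk.injEq] at this
    exact this.1
  | inr i =>
    have := hmap i k
    rw [Prod.mk.injEq] at this
    exact this.2
end

section
/- Let S be a stabilizer subspace of F_2^{2n} with basis v^1,…,v^n, and let Ω* be the family of subsets of {1,…,n} given by ω^k_* = supp(v^k) for 1 ≤ k ≤ n and ω^{kl}_* = supp(v^k + v^l) for 1 ≤ k < l ≤ n. Then a stabilizer subspace S' of F_2^{2n} is LC equivalent to S if and only if T^{Ω*}(S') is nonempty, i.e. if and only if there exist w^1,…,w^n ∈ S' with supp(w^k) = supp(v^k) for all k and supp(w^k + w^l) = supp(v^k + v^l) for all k < l. -/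
namespace LCAux

set_option maxRecDepth 20000


set_option maxRecDepth 20000

def app (a b c d : F2) (x : F2 × F2) : F2 × F2 := (a*x.1 + b*x.2, c*x.1 + d*x.2)

private lemma d1' : ∀ t : (F2 × F2) × (F2 × F2), (t.1 ≠ 0 ∧ t.2 ≠ 0) →
    ∃ a b c d : F2, a*d+b*c=1 ∧ app a b c d t.1 = t.2 := by decide

lemma d1 {x x' : F2 × F2} (h : x ≠ 0) (h' : x' ≠ 0) :
    ∃ a b c d : F2, a*d+b*c=1 ∧ app a b c d x = x' := d1' (x, x') ⟨h, h'⟩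

private lemma d2' : ∀ t : ((F2 × F2) × (F2 × F2)) × (F2 × F2) × (F2 × F2),
    (t.1.1 ≠ 0 ∧ t.1.2 ≠ 0 ∧ t.1.1 ≠ t.1.2 ∧ t.2.1 ≠ 0 ∧ t.2.2 ≠ 0 ∧ t.2.1 ≠ t.2.2) →
    ∃ a b c d : F2, a*d+b*c=1 ∧ app a b c d t.1.1 = t.2.1 ∧ app a b c d t.1.2 = t.2.2 := by
  decide

lemma d2 {x y x' y' : F2 × F2} (h1 : x ≠ 0) (h2 : y ≠ 0) (h3 : x ≠ y)
    (h4 : x' ≠ 0) (h5 : y' ≠ 0) (h6 : x' ≠ y') :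
    ∃ a b c d : F2, a*d+b*c=1 ∧ app a b c d x = x' ∧ app a b c d y = y' :=
  d2' ((x, y), (x', y')) ⟨h1, h2, h3, h4, h5, h6⟩

private lemma d3' : ∀ t : (F2 × F2) × (F2 × F2) × (F2 × F2),
    (t.2.2 = 0 ∨ t.2.2 = t.1 ∨ t.2.2 = t.2.1 ∨ t.2.2 = t.1 + t.2.1) ∨
      (t.1 = 0 ∨ t.2.1 = 0 ∨ t.1 = t.2.1) := by decide

lemma d3 {x y : F2 × F2} (z : F2 × F2) (h1 : x ≠ 0) (h2 : y ≠ 0) (h3 : x ≠ y) :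
    z = 0 ∨ z = x ∨ z = y ∨ z = x + y := by
  rcases d3' (x,y,z) with h | h | h | h
  · exact h
  · exact absurd h h1
  · exact absurd h h2
  · exact absurd h h3

private lemma d4' : ∀ t : (F2 × F2) × (F2 × F2) × (F2 × F2),
    (t.1 ≠ 0 ∧ t.2.1 ≠ 0 ∧ t.1 ≠ t.2.1 ∧ t.2.2 ≠ 0 ∧ t.2.2 ≠ t.1 ∧ t.2.2 ≠ t.2.1) →
    t.2.2 = t.1 + t.2.1 := by decide

lemma d4 {x y z : F2 × F2} (h1 : x ≠ 0) (h2 : y ≠ 0) (h3 : x ≠ y)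
    (h4 : z ≠ 0) (h5 : z ≠ x) (h6 : z ≠ y) : z = x + y :=
  d4' (x,y,z) ⟨h1, h2, h3, h4, h5, h6⟩

lemma app_add (a b c d : F2) (x y : F2 × F2) :
    app a b c d (x+y) = app a b c d x + app a b c d y := by
  simp only [app, Prod.fst_add, Prod.snd_add, Prod.mk_add_mk, Prod.mk.injEq]
  constructor <;> ring

lemma app_zero (a b c d : F2) : app a b c d 0 = 0 := by simp [app]

private lemma d7' : ∀ t : (F2 × F2) × (F2 × F2), t.1 + t.2 = 0 ↔ t.1 = t.2 := by decide

lemma d7 (x y : F2 × F2) : x + y = 0 ↔ x = y := d7' (x,y)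

/-- Core combinatorial lemma. -/
lemma core {n : ℕ} (p q : Fin n → F2 × F2)
    (H0 : ∀ k, p k = 0 ↔ q k = 0)
    (H1 : ∀ k l, p k = p l ↔ q k = q l) :
    ∃ a b c d : F2, a*d+b*c = 1 ∧ ∀ k, app a b c d (p k) = q k := by
  by_cases hA : ∀ k, p k = 0
  · exact ⟨1, 0, 0, 1, by ring, fun k => by
      rw [hA k, app_zero, eq_comm, ← H0 k, hA k]⟩
  push_neg at hA
  obtain ⟨k0, hk0⟩ := hA
  have hq0 : q k0 ≠ 0 := fun h => hk0 ((H0 k0).mpr h)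
  by_cases hB : ∀ k, p k = 0 ∨ p k = p k0
  · obtain ⟨a, b, c, d, hdet, happ⟩ := d1 hk0 hq0
    refine ⟨a, b, c, d, hdet, fun k => ?_⟩
    rcases hB k with h | h
    · rw [h, app_zero, eq_comm, ← H0 k, h]
    · rw [h, happ, (H1 k k0).mp h]
  push_neg at hB
  obtain ⟨k1, hk1, hk10⟩ := hB
  have hq1 : q k1 ≠ 0 := fun h => hk1 ((H0 k1).mpr h)
  have hq10 : q k1 ≠ q k0 := fun h => hk10 ((H1 k1 k0).mpr h)
  obtain ⟨a, b, c, d, hdet, h0, h1⟩ := d2 hk0 hk1 (Ne.symm hk10) hq0 hq1 (Ne.symm hq10)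
  refine ⟨a, b, c, d, hdet, fun k => ?_⟩
  rcases d3 (p k) hk0 hk1 (Ne.symm hk10) with h | h | h | h
  · rw [h, app_zero, eq_comm, ← H0 k, h]
  · rw [h, h0, (H1 k k0).mp h]
  · rw [h, h1, (H1 k k1).mp h]
  · have hpk : p k ≠ 0 := by
      rw [h]; intro hc
      exact hk10 (((d7 _ _).mp hc).symm)
    have hpk0 : p k ≠ p k0 := by
      rw [h]; intro hc
      nth_rewrite 2 [← add_zero (p k0)] at hc
      exact hk1 (add_left_cancel hc)
    have hpk1 : p k ≠ p k1 := by
      rw [h]; intro hc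
      nth_rewrite 2 [← zero_add (p k1)] at hc
      exact hk0 (add_right_cancel hc)
    have hq : q k = q k0 + q k1 :=
      d4 hq0 hq1 (Ne.symm hq10) (fun hc => hpk ((H0 k).mpr hc))
        (fun hc => hpk0 ((H1 k k0).mpr hc)) (fun hc => hpk1 ((H1 k k1).mpr hc))
    rw [h, app_add, h0, h1, hq]


def blk {n : ℕ} (A B C D : Fin n → F2) : Matrix (Fin n ⊕ Fin n) (Fin n ⊕ Fin n) F2 :=
  Matrix.fromBlocks (Matrix.diagonal A) (Matrix.diagonal B)
    (Matrix.diagonal C) (Matrix.diagonal D)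

lemma blk_mulVec_inl {n : ℕ} (A B C D : Fin n → F2) (u : V n) (i : Fin n) :
    (blk A B C D).mulVec u (Sum.inl i) = A i * u (Sum.inl i) + B i * u (Sum.inr i) := by
  simp [blk, Matrix.mulVec, dotProduct, Fintype.sum_sum_type, Matrix.diagonal,
    Finset.sum_ite_eq, ite_mul]

lemma blk_mulVec_inr {n : ℕ} (A B C D : Fin n → F2) (u : V n) (i : Fin n) :
    (blk A B C D).mulVec u (Sum.inr i) = C i * u (Sum.inl i) + D i * u (Sum.inr i) := by
  simp [blk, Matrix.mulVec, dotProduct, Fintype.sum_sum_type, Matrix.diagonal,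
    Finset.sum_ite_eq, ite_mul]

lemma blk_pair {n : ℕ} (A B C D : Fin n → F2) (u : V n) (i : Fin n) :
    ((blk A B C D).mulVec u (Sum.inl i), (blk A B C D).mulVec u (Sum.inr i)) =
      app (A i) (B i) (C i) (D i) (u (Sum.inl i), u (Sum.inr i)) := by
  rw [blk_mulVec_inl, blk_mulVec_inr]; rfl

lemma char2 : ∀ x : F2, x + x = 0 := by decide

lemma blk_isUnit {n : ℕ} (A B C D : Fin n → F2)
    (hdet : ∀ i, A i * D i + B i * C i = 1) : IsUnit (blk A B C D) := by
  have h : blk A B C D * blk D B C A = 1 := by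
    simp only [blk, Matrix.fromBlocks_multiply, Matrix.diagonal_mul_diagonal,
      Matrix.diagonal_add]
    have e1 : (fun i => A i * D i + B i * C i) = fun _ => (1:F2) := funext fun i => hdet i
    have e2 : (fun i => A i * B i + B i * A i) = fun _ => (0:F2) := funext fun i => by
      rw [mul_comm (B i) (A i)]; exact char2 _
    have e3 : (fun i => C i * D i + D i * C i) = fun _ => (0:F2) := funext fun i => by
      rw [mul_comm (D i) (C i)]; exact char2 _
    have e4 : (fun i => C i * B i + D i * A i) = fun _ => (1:F2) := funext fun i => by
      rw [mul_comm (C i) (B i), mul_comm (D i) (A i), add_comm]; exact hdet i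
    rw [e1, e2, e3, e4]
    have : (Matrix.diagonal fun _ : Fin n => (1:F2)) = 1 := by
      rw [show (fun _ : Fin n => (1:F2)) = (1 : Fin n → F2) from rfl]
      exact Matrix.diagonal_one
    rw [this]
    have : (Matrix.diagonal fun _ : Fin n => (0:F2)) = 0 := by
      rw [show (fun _ : Fin n => (0:F2)) = (0 : Fin n → F2) from rfl]
      exact Matrix.diagonal_zero
    rw [this, Matrix.fromBlocks_one]
  have hd : (blk A B C D).det * (blk D B C A).det = 1 := by
    rw [← Matrix.det_mul, h, Matrix.det_one]
  exact (Matrix.isUnit_iff_isUnit_det _).mpr (IsUnit.of_mul_eq_one _ hd)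

lemma mulVec_injective {n : ℕ} (Q : Matrix (Fin n ⊕ Fin n) (Fin n ⊕ Fin n) F2)
    (hQ : IsUnit Q) : Function.Injective Q.mulVec := by
  obtain ⟨u, rfl⟩ := hQ
  intro x y hxy
  have := congrArg (fun z => Matrix.mulVec ((u⁻¹ : (Matrix (Fin n ⊕ Fin n) (Fin n ⊕ Fin n) F2)ˣ) : Matrix (Fin n ⊕ Fin n) (Fin n ⊕ Fin n) F2) z) hxy
  simpa [Matrix.mulVec_mulVec, Matrix.nonsing_inv_mul _ ((Matrix.isUnit_iff_isUnit_det _).mp u.isUnit)] using this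
-- singleton vector
def single {n : ℕ} (i : Fin n) (z : F2 × F2) : V n := fun j =>
  match j with
  | Sum.inl j => if j = i then z.1 else 0
  | Sum.inr j => if j = i then z.2 else 0

lemma blk_mulVec_single {n : ℕ} (A B C D : Fin n → F2) (i : Fin n) (z : F2 × F2) :
    (blk A B C D).mulVec (single i z) = single i (app (A i) (B i) (C i) (D i) z) := by
  funext j
  cases j with
  | inl j =>
    rw [blk_mulVec_inl]
    by_cases h : j = i
    · subst h; simp [single, app]
    · simp [single, h]
  | inr j =>
    rw [blk_mulVec_inr]
    by_cases h : j = i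
    · subst h; simp [single, app]
    · simp [single, h]

private lemma d8' : ∀ t : ((F2 × F2) × (F2 × F2)) × (F2 × F2),
    (t.1.1.1 * t.1.2.2 + t.1.2.1 * t.1.1.2 = 1) →
      (app t.1.1.1 t.1.2.1 t.1.1.2 t.1.2.2 t.2 = 0 ↔ t.2 = 0) := by decide

lemma d8 {a b c d : F2} (h : a*d + b*c = 1) (x : F2 × F2) :
    app a b c d x = 0 ↔ x = 0 := d8' ((⟨a,c⟩, ⟨b,d⟩), x) h

private lemma d9' : ∀ t : (F2 × F2) × (F2 × F2),
    (t.1.1 * t.2.2 + t.2.1 * t.1.2 ≠ 1) →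
      ∃ z : F2 × F2, z ≠ 0 ∧ app t.1.1 t.2.1 t.1.2 t.2.2 z = 0 := by decide

lemma d9 {a b c d : F2} (h : a*d + b*c ≠ 1) :
    ∃ z : F2 × F2, z ≠ 0 ∧ app a b c d z = 0 := d9' (⟨a,c⟩, ⟨b,d⟩) h

lemma single_ne_zero {n : ℕ} (i : Fin n) {z : F2 × F2} (hz : z ≠ 0) : single i z ≠ 0 := by
  intro h
  apply hz
  have h1 := congrFun h (Sum.inl i)
  have h2 := congrFun h (Sum.inr i)
  simp [single] at h1 h2
  exact Prod.ext h1 h2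

lemma blk_det_one {n : ℕ} (A B C D : Fin n → F2) (hU : IsUnit (blk A B C D)) (i : Fin n) :
    A i * D i + B i * C i = 1 := by
  by_contra h
  obtain ⟨z, hz, happ⟩ := d9 h
  apply single_ne_zero i hz
  apply mulVec_injective _ hU
  rw [blk_mulVec_single, happ, Matrix.mulVec_zero]
  funext j
  cases j <;> simp [single]

lemma supp_mulVec {n : ℕ} (A B C D : Fin n → F2) (hU : IsUnit (blk A B C D)) (u : V n) :
    supp ((blk A B C D).mulVec u) = supp u := by
  ext i
  simp only [supp, Finset.mem_filter, Finset.mem_univ, true_and]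
  rw [not_iff_not]
  have h := blk_pair A B C D u i
  constructor
  · intro hQ
    have : app (A i) (B i) (C i) (D i) (u (Sum.inl i), u (Sum.inr i)) = 0 := by
      rw [← h, hQ]; rfl
    exact (d8 (blk_det_one A B C D hU i) _).mp this
  · intro hu
    have hz : (u (Sum.inl i), u (Sum.inr i)) = (0 : F2 × F2) := hu
    have : ((blk A B C D).mulVec u (Sum.inl i), (blk A B C D).mulVec u (Sum.inr i))
        = (0 : F2 × F2) := by
      rw [h, hz, (d8 (blk_det_one A B C D hU i) 0).mpr rfl]
    exact this

lemma mem_supp {n : ℕ} (u : V n) (i : Fin n) :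
    i ∈ supp u ↔ ((u (Sum.inl i), u (Sum.inr i)) : F2 × F2) ≠ 0 := by
  simp only [supp, Finset.mem_filter, Finset.mem_univ, true_and]
  rfl

end LCAux

open LCAux

/-- Let `S` be a stabilizer subspace with basis `v^1,…,v^n` and let `Ω*` be given by
`ω^k_* = supp(v^k)` and `ω^{kl}_* = supp(v^k + v^l)`. A stabilizer subspace `S'` is LC
equivalent to `S` if and only if `T^{Ω*}(S')` is nonempty, i.e. iff there are
`w^1,…,w^n ∈ S'` with `supp(w^k) = supp(v^k)` and `supp(w^k + w^l) = supp(v^k + v^l)`. -/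
theorem LCequiv_iff_Tset_star_nonempty (n : ℕ) (hn : 1 ≤ n)
    (S S' : Submodule F2 (V n)) (hS : IsStabilizer S) (hS' : IsStabilizer S')
    (v : Fin n → V n) (hvS : ∀ k, v k ∈ S)
    (hli : LinearIndependent F2 v)
    (hspan : Submodule.span F2 (Set.range v) = S) :
    LCequiv S S' ↔
      ∃ w : Fin n → V n, (∀ k, w k ∈ S') ∧
        (∀ k, supp (w k) = supp (v k)) ∧
        ∀ k l, k < l → supp (w k + w l) = supp (v k + v l) := by
  constructor
  · rintro ⟨Q, ⟨hU, A, B, C, D, rfl⟩, hmap⟩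
    refine ⟨fun k => (blk A B C D).mulVec (v k), fun k => ?_, fun k => ?_, fun k l _ => ?_⟩
    · rw [← hmap]
      exact Submodule.mem_map_of_mem (hvS k)
    · exact supp_mulVec A B C D hU (v k)
    · rw [← Matrix.mulVec_add]
      exact supp_mulVec A B C D hU (v k + v l)
  · rintro ⟨w, hwS', hsupp, hsuppp⟩
    -- pairwise support conditions for all k, l
    have hsum : ∀ k l : Fin n, supp (w k + w l) = supp (v k + v l) := by
      intro k l
      rcases lt_trichotomy k l with h | h | h
      · exact hsuppp k l h
      · subst h
        have hz : ∀ u : V n, u + u = (0 : V n) := fun u => funext fun j => char2 _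
        rw [hz, hz]
      · rw [add_comm (w k), add_comm (v k)]
        exact hsuppp l k h
    -- per-coordinate matrices
    have H : ∀ i : Fin n, ∃ a b c d : F2, a*d+b*c = 1 ∧
        ∀ k, app a b c d (v k (Sum.inl i), v k (Sum.inr i))
          = (w k (Sum.inl i), w k (Sum.inr i)) := by
      intro i
      apply core
      · intro k
        have := (Finset.ext_iff.mp (hsupp k) i)
        rw [mem_supp, mem_supp] at this
        rw [← not_iff_not]
        exact this.symm
      · intro k l
        have := (Finset.ext_iff.mp (hsum k l) i)
        rw [mem_supp, mem_supp] at this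
        have e1 : ((v k + v l) (Sum.inl i), (v k + v l) (Sum.inr i))
            = ((v k (Sum.inl i), v k (Sum.inr i)) : F2 × F2)
              + (v l (Sum.inl i), v l (Sum.inr i)) := rfl
        have e2 : ((w k + w l) (Sum.inl i), (w k + w l) (Sum.inr i))
            = ((w k (Sum.inl i), w k (Sum.inr i)) : F2 × F2)
              + (w l (Sum.inl i), w l (Sum.inr i)) := rfl
        rw [e1, e2] at this
        rw [← LCAux.d7, ← LCAux.d7 ((w k (Sum.inl i), w k (Sum.inr i)))]
        rw [← not_iff_not]
        exact this.symm
    choose A B C D hdet happ using H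
    have hU : IsUnit (blk A B C D) := blk_isUnit A B C D hdet
    have hQw : ∀ k, (blk A B C D).mulVec (v k) = w k := by
      intro k
      funext j
      cases j with
      | inl i =>
        have := blk_pair A B C D (v k) i
        rw [happ i k] at this
        exact congrArg Prod.fst this
      | inr i =>
        have := blk_pair A B C D (v k) i
        rw [happ i k] at this
        exact congrArg Prod.snd this
    refine ⟨blk A B C D, ⟨hU, A, B, C, D, rfl⟩, ?_⟩
    have hw_eq : (blk A B C D).mulVecLin ∘ v = w := by
      funext k
      rw [Function.comp_apply, Matrix.mulVecLin_apply, hQw k]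
    have hker : LinearMap.ker (blk A B C D).mulVecLin = ⊥ := by
      rw [LinearMap.ker_eq_bot]
      intro x y hxy
      exact mulVec_injective _ hU (by simpa [Matrix.mulVecLin_apply] using hxy)
    have hw_li : LinearIndependent F2 w := by
      rw [← hw_eq]
      exact hli.map' _ hker
    rw [← hspan, Submodule.map_span, ← Set.range_comp, hw_eq]
    have hle : Submodule.span F2 (Set.range w) ≤ S' :=
      Submodule.span_le.mpr (by rintro _ ⟨k, rfl⟩; exact hwS' k)
    apply Submodule.eq_of_le_of_finrank_eq hle
    rw [finrank_span_eq_card hw_li, Fintype.card_fin, hS'.1]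
end
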